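/- Let k be a field and A a finite set of points of k^n. Then for every β in the limiting set E(D(A)) there exists a polynomial φ_β ∈ k[X_1,…,X_n] such that: (i) the leading term of φ_β in the lexicographic ordering (with X_1 < X_2 < … < X_n) is X^β; (ii) every exponent γ of a nonleading term of φ_β satisfies either (p̂(γ) lies in ∪_{a₁ ∈ p(A)} D(H(a₁)), p̂(γ) < p̂(β) lexicographically, and γ_1 < #p(A)) or (p̂(γ) = p̂(β) and γ_1 < β_1); and (iii) φ_β(a) = 0 for all a ∈ A. -/

import Mathlib

/-- `D ∈ 𝒟ₙ`: a finite set `D ⊆ ℕ₀ⁿ` (given as a `Finset`) such that whenever `d ∈ D`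
and `dᵢ ≠ 0`, then `d − eᵢ ∈ D`. -/
def IsDset {n : ℕ} (D : Finset (Fin n → ℕ)) : Prop :=
  ∀ d ∈ D, ∀ i : Fin n, d i ≠ 0 → d - Pi.single i 1 ∈ D

variable {k : Type*} [Field k] [DecidableEq k]

/-- The set `D(A) ⊆ ℕ₀ⁿ` attached to a finite set of points `A ⊆ kⁿ`, defined by
induction on `n`.  For `n = 0`, `D(A)` is empty if `A` is and the single point of `ℕ₀⁰`
otherwise (so that for `n = 1` one gets `D(A) = {0, 1, …, #A − 1}`).  For `n + 1`:
writing `p(A)` for the set of first coordinates of `A` and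
`H a₁ = p⁻¹(a₁) ∩ A ⊆ kⁿ` (via the projection `Fin.tail` forgetting the first
coordinate), `D(A) = Σ_{a₁ ∈ p(A)} D(H a₁)`, the sum with respect to the addition `+`
on `𝒟`; spelled out via the closed formula for such sums, `d ∈ D(A)` iff
`Fin.tail d ∈ ⋃_{a₁ ∈ p(A)} D(H a₁)` and `d 0 < #{a₁ ∈ p(A) : Fin.tail d ∈ D(H a₁)}`. -/
def DofA : (n : ℕ) → Finset (Fin n → k) → Finset (Fin n → ℕ)
  | 0, A => A.image (fun _ => (fun _ => 0))
  | (n + 1), A =>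
      ((A.image (fun a => a 0)).biUnion
          (fun a1 => DofA n ((A.filter (fun a => a 0 = a1)).image (fun a => Fin.tail a)))).biUnion
        (fun dh =>
          (Finset.range
              (((A.image (fun a => a 0)).filter
                  (fun a1 =>
                    dh ∈ DofA n ((A.filter (fun a => a 0 = a1)).image (fun a => Fin.tail a)))).card)).image
            (fun j => Fin.cons j dh))


/-- The strict lexicographic order on exponent vectors corresponding to the
lexicographic monomial ordering with `X₁ < X₂ < … < Xₙ`: the exponents of the
variables with *larger* index are compared first. -/
def lexLt {n : ℕ} (α β : Fin n → ℕ) : Prop :=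
  ∃ i : Fin n, α i < β i ∧ ∀ j : Fin n, i < j → α j = β j

/-- The (non-strict) lexicographic order corresponding to `X₁ < X₂ < … < Xₙ`. -/
def lexLe {n : ℕ} (α β : Fin n → ℕ) : Prop :=
  lexLt α β ∨ α = β

/-- Membership in the limiting set `E(D)`: `β ∉ D` and whenever `βᵢ ≠ 0`,
then `β − eᵢ ∈ D`. -/
def inE {n : ℕ} (D : Finset (Fin n → ℕ)) (β : Fin n → ℕ) : Prop :=
  β ∉ D ∧ ∀ i : Fin n, β i ≠ 0 → β - Pi.single i 1 ∈ D

/-- The coefficient of the monomial `X^α` in the multivariate polynomial `f`,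
with the exponent given as a function `Fin n → ℕ`. -/
noncomputable def coeffv {n : ℕ} {R : Type*} [CommSemiring R]
    (f : MvPolynomial (Fin n) R) (α : Fin n → ℕ) : R :=
  MvPolynomial.coeff (Finsupp.equivFunOnFinite.symm α) f


/-!
Every monomial `X^γ` agrees on `A` with a linear combination of monomials `X^d`, `d ∈ D(A)`,
that are lexicographically at most `γ`; for `β ∉ D(A)` the difference `φ_β` of `X^β` and such a
combination has the required shape.

The reduction is by induction on `n` and then well-founded induction on `γ = (γ₀, γ')`. Let `T`
be the set of `a₁ ∈ p(A)` with `γ' ∈ D(H(a₁))`. If `γ₀ < #T`, then `γ ∈ D(A)`. Otherwise write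
`X₁^γ₀ = r + q · ∏_{t ∈ T} (X₁ - t)` with `deg r < #T ≤ γ₀`. The term `r X^γ'` only has
monomials `(j, γ')` with `j < γ₀`. The other term vanishes over `T`; over the remaining
`a₁ ∈ p(A)` we replace `X^γ'` by the Lagrange interpolation in `X₁` of the reductions of `X^γ'`
on the fibres `H(a₁)`, which lie strictly below `γ'` because `γ' ∉ D(H(a₁))`. The resulting
polynomial agrees with `X^γ` on `A` and has all its monomials below `γ`, so the induction
hypothesis applies to each of them.
-/

open MvPolynomial Finset

section LexOrder

variable {n : ℕ}

lemma lexLt_iff_toColex_lt {α β : Fin n → ℕ} : lexLt α β ↔ toColex α < toColex β :=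
  exists_congr fun _ => and_comm

lemma lexLt_trans {α β γ : Fin n → ℕ} (h₁ : lexLt α β) (h₂ : lexLt β γ) : lexLt α γ := by
  rw [lexLt_iff_toColex_lt] at *
  exact h₁.trans h₂

lemma lexLt_of_lexLe_of_lexLt {α β γ : Fin n → ℕ} (h₁ : lexLe α β) (h₂ : lexLt β γ) :
    lexLt α γ := by
  rcases h₁ with h₁ | rfl
  exacts [lexLt_trans h₁ h₂, h₂]

lemma wellFounded_lexLt : WellFounded (@lexLt n) :=
  Subrelation.wf lexLt_iff_toColex_lt.mp (InvImage.wf toColex wellFounded_lt)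

lemma lexLt_succ_iff {δ γ : Fin (n + 1) → ℕ} :
    lexLt δ γ ↔ lexLt (Fin.tail δ) (Fin.tail γ) ∨ (Fin.tail δ = Fin.tail γ ∧ δ 0 < γ 0) := by
  constructor
  · rintro ⟨i, hi, he⟩
    cases i using Fin.cases with
    | zero => exact Or.inr ⟨funext fun j => he j.succ (Fin.succ_pos j), hi⟩
    | succ i => exact Or.inl ⟨i, hi, fun j hj => he j.succ (Fin.succ_lt_succ_iff.mpr hj)⟩
  · rintro (⟨i, hi, he⟩ | ⟨ht, h0⟩)
    · refine ⟨i.succ, hi, Fin.cases (fun h => absurd h (Fin.not_lt_zero _)) fun j hj => ?_⟩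
      exact he j (Fin.succ_lt_succ_iff.mp hj)
    · exact ⟨0, h0, Fin.cases (fun h => absurd h (lt_irrefl _)) fun j _ => congrFun ht j⟩

end LexOrder

section DofA

variable {n : ℕ} {α : Type*} [DecidableEq α]

-- the paper's `H(a₁)`, as a subset of `αⁿ`
def fiber (A : Finset (Fin (n + 1) → α)) (a₁ : α) : Finset (Fin n → α) :=
  (A.filter (fun a => a 0 = a₁)).image (fun a => Fin.tail a)

lemma tail_mem_fiber {A : Finset (Fin (n + 1) → α)} {a : Fin (n + 1) → α} (ha : a ∈ A) :
    Fin.tail a ∈ fiber A (a 0) :=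
  mem_image_of_mem _ (mem_filter.mpr ⟨ha, rfl⟩)

lemma mem_DofA_succ {A : Finset (Fin (n + 1) → α)} {d : Fin (n + 1) → ℕ} :
    d ∈ DofA (n + 1) A ↔
      d 0 < #{a₁ ∈ A.image (fun a => a 0) | Fin.tail d ∈ DofA n (fiber A a₁)} := by
  rw [DofA, mem_biUnion]
  constructor
  · rintro ⟨e, -, hd⟩
    obtain ⟨j, hj, rfl⟩ := mem_image.mp hd
    simpa [fiber] using hj
  · intro h
    obtain ⟨a₁, ha₁⟩ := card_pos.mp (Nat.zero_lt_of_lt h)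
    exact ⟨Fin.tail d, mem_biUnion.mpr ⟨a₁, (mem_filter.mp ha₁).1, (mem_filter.mp ha₁).2⟩,
      mem_image.mpr ⟨d 0, mem_range.mpr h, Fin.cons_self_tail d⟩⟩

lemma tail_mem_or_of_mem_DofA_of_lexLt {A : Finset (Fin (n + 1) → α)} {γ β : Fin (n + 1) → ℕ}
    (hγ : γ ∈ DofA (n + 1) A) (hlt : lexLt γ β) :
    (Fin.tail γ ∈ (A.image (fun a => a 0)).biUnion (fun a₁ => DofA n (fiber A a₁)) ∧
        lexLt (Fin.tail γ) (Fin.tail β) ∧ γ 0 < #(A.image (fun a => a 0))) ∨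
      (Fin.tail γ = Fin.tail β ∧ γ 0 < β 0) := by
  rw [mem_DofA_succ] at hγ
  refine (lexLt_succ_iff.mp hlt).imp_left fun htail => ⟨?_, htail, hγ.trans_le (card_filter_le _ _)⟩
  obtain ⟨a₁, ha₁⟩ := card_pos.mp (Nat.zero_lt_of_lt hγ)
  exact mem_biUnion.mpr ⟨a₁, (mem_filter.mp ha₁).1, (mem_filter.mp ha₁).2⟩

end DofA

section FirstVariable

variable {R : Type*} [CommSemiring R] {n : ℕ}

lemma finSuccEquiv_rename_succ (ψ : MvPolynomial (Fin n) R) :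
    finSuccEquiv R n (rename Fin.succ ψ) = Polynomial.C ψ := by
  induction ψ using MvPolynomial.induction_on with
  | C a => simp [finSuccEquiv_apply]
  | add p q hp hq => simp [hp, hq]
  | mul_X p i hp => simp [hp, finSuccEquiv_X_succ]

lemma finSuccEquiv_aeval_X_zero (p : Polynomial R) :
    finSuccEquiv R n (Polynomial.aeval (X 0) p) = p.map C := by
  rw [← Polynomial.aeval_algHom_apply, finSuccEquiv_X_zero]
  induction p using Polynomial.induction_on <;> simp_all

lemma coeff_aeval_X_zero_mul_rename_succ (p : Polynomial R) (ψ : MvPolynomial (Fin n) R)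
    (d : Fin (n + 1) →₀ ℕ) :
    coeff d (Polynomial.aeval (X 0) p * rename Fin.succ ψ) = p.coeff (d 0) * coeff d.tail ψ := by
  rw [← Finsupp.cons_tail d, ← finSuccEquiv_coeff_coeff, map_mul, finSuccEquiv_rename_succ,
    finSuccEquiv_aeval_X_zero, Polynomial.coeff_mul_C, Polynomial.coeff_map, coeff_C_mul,
    Finsupp.cons_zero, Finsupp.tail_cons]

lemma aeval_X_zero_mul_rename_succ_mem_restrictSupport {p : Polynomial R}
    {ψ : MvPolynomial (Fin n) R} {S : Set (Fin n →₀ ℕ)} (hψ : ψ ∈ restrictSupport R S) :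
    Polynomial.aeval (X 0) p * rename Fin.succ ψ ∈
      restrictSupport R {d | d 0 ∈ p.support ∧ d.tail ∈ S} := by
  rw [mem_restrictSupport_iff]
  intro d hd
  rw [Finset.mem_coe, mem_support_iff, coeff_aeval_X_zero_mul_rename_succ] at hd
  exact ⟨Polynomial.mem_support_iff.mpr (left_ne_zero_of_mul hd),
    hψ (mem_support_iff.mpr (right_ne_zero_of_mul hd))⟩

lemma eval_aeval_X_zero_mul_rename_succ (p : Polynomial R) (ψ : MvPolynomial (Fin n) R)
    (a : Fin (n + 1) → R) :
    eval a (Polynomial.aeval (X 0) p * rename Fin.succ ψ) =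
      p.eval (a 0) * eval (Fin.tail a) ψ := by
  rw [map_mul, eval_rename]
  congr 1
  induction p using Polynomial.induction_on <;> simp_all

lemma eval_monomial_succ (a : Fin (n + 1) → R) (γ : Fin (n + 1) →₀ ℕ) (r : R) :
    eval a (monomial γ r) = a 0 ^ γ 0 * eval (Fin.tail a) (monomial γ.tail r) := by
  simp only [eval_monomial, Finsupp.prod_pow, Fin.prod_univ_succ, Finsupp.tail_apply, Fin.tail]
  ring

end FirstVariable

lemma eval_nodal_mul_sum_basis {F ι : Type*} [Field F] [DecidableEq ι] {s T : Finset ι}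
    {v w : ι → F} {j : ι} {c : F} (hvs : Set.InjOn v s) (hj : j ∈ T ∪ s)
    (hw : j ∈ s → w j = c) :
    (Lagrange.nodal T v).eval (v j) * ∑ i ∈ s, (Lagrange.basis s v i).eval (v j) * w i =
      (Lagrange.nodal T v).eval (v j) * c := by
  by_cases hjs : j ∈ s
  · rw [sum_eq_single_of_mem j hjs fun i _ hij => by
        rw [Lagrange.eval_basis_of_ne hij hjs, zero_mul],
      Lagrange.eval_basis_self hvs hjs, one_mul, hw hjs]
  · rw [Lagrange.eval_nodal_at_node ((mem_union.mp hj).resolve_right hjs), zero_mul, zero_mul]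

lemma lt_card_of_mem_support_modByMonic_nodal {F ι : Type*} [Field F] {T : Finset ι}
    {v : ι → F} {p : Polynomial F} {j : ℕ} (hj : j ∈ (p %ₘ Lagrange.nodal T v).support) :
    j < #T := by
  by_contra! h
  refine Polynomial.mem_support_iff.mp hj (Polynomial.coeff_eq_zero_of_degree_lt ?_)
  refine (Polynomial.degree_modByMonic_lt _ Lagrange.nodal_monic).trans_le ?_
  rw [Lagrange.degree_nodal]
  exact_mod_cast h

section VanishingSubspace

variable {K σ : Type*} [Field K]

noncomputable def vanishingSubspace (A : Finset (σ → K)) : Submodule K (MvPolynomial σ K) :=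
  (vanishingIdeal K (A : Set (σ → K))).restrictScalars K

lemma mem_vanishingSubspace {A : Finset (σ → K)} {f : MvPolynomial σ K} :
    f ∈ vanishingSubspace A ↔ ∀ a ∈ A, eval a f = 0 := by
  simp [vanishingSubspace, aeval_eq_eval]

lemma mem_sup_vanishingSubspace_of_eval_eq {A : Finset (σ → K)}
    {M : Submodule K (MvPolynomial σ K)} {f g : MvPolynomial σ K} (hg : g ∈ M)
    (h : ∀ a ∈ A, eval a f = eval a g) : f ∈ M ⊔ vanishingSubspace A :=
  Submodule.mem_sup.mpr ⟨g, hg, f - g,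
    mem_vanishingSubspace.mpr fun a ha => by rw [map_sub, h a ha, sub_self], add_sub_cancel g f⟩

end VanishingSubspace

section Reduction

variable {n : ℕ}

lemma sup_restrictSupport_lexLt_le (A : Finset (Fin n → k)) (γ : Fin n →₀ ℕ)
    (ih : ∀ δ : Fin n →₀ ℕ, lexLt δ γ →
      monomial δ 1 ∈ restrictSupport k {d | ⇑d ∈ DofA n A ∧ lexLe d δ} ⊔ vanishingSubspace A) :
    restrictSupport k {d | lexLt d γ} ⊔ vanishingSubspace A ≤
      restrictSupport k {d | ⇑d ∈ DofA n A ∧ lexLe d γ} ⊔ vanishingSubspace A := by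
  refine sup_le ?_ le_sup_right
  rw [restrictSupport_eq_span, Submodule.span_le]
  rintro _ ⟨δ, hδ, rfl⟩
  have hmono : restrictSupport k {d | ⇑d ∈ DofA n A ∧ lexLe d δ} ≤
      restrictSupport k {d | ⇑d ∈ DofA n A ∧ lexLe d γ} :=
    restrictSupport_mono _ fun d hd => ⟨hd.1, Or.inl (lexLt_of_lexLe_of_lexLt hd.2 hδ)⟩
  exact sup_le_sup_right hmono _ (ih δ hδ)

lemma exists_lexLt_eqOn_of_notMem_DofA {B : Finset (Fin n → k)} {e : Fin n →₀ ℕ}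
    (h : monomial e 1 ∈ restrictSupport k {d | ⇑d ∈ DofA n B ∧ lexLe d e} ⊔ vanishingSubspace B)
    (he : ⇑e ∉ DofA n B) :
    ∃ ψ ∈ restrictSupport k {d | lexLt d e}, ∀ b ∈ B, eval b ψ = eval b (monomial e 1) := by
  obtain ⟨ψ, hψ, z, hz, hsum⟩ := Submodule.mem_sup.mp h
  refine ⟨ψ, restrictSupport_mono _ ?_ hψ, fun b hb => ?_⟩
  · rintro d ⟨hdD, hd | hd⟩
    exacts [hd, absurd (DFunLike.coe_injective hd ▸ hdD) he]
  · rw [← hsum, map_add, mem_vanishingSubspace.mp hz b hb, add_zero]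

lemma monomial_mem_restrictSupport_lexLt_sup_of_notMem_DofA
    (ih : ∀ (B : Finset (Fin n → k)) (e : Fin n →₀ ℕ),
      monomial e 1 ∈ restrictSupport k {d | ⇑d ∈ DofA n B ∧ lexLe d e} ⊔ vanishingSubspace B)
    {A : Finset (Fin (n + 1) → k)} {γ : Fin (n + 1) →₀ ℕ} (hγ : ⇑γ ∉ DofA (n + 1) A) :
    monomial γ 1 ∈ restrictSupport k {d | lexLt d γ} ⊔ vanishingSubspace A := by
  set T := {a₁ ∈ A.image (fun a => a 0) | Fin.tail ⇑γ ∈ DofA n (fiber A a₁)}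
  set s := A.image (fun a => a 0) \ T
  have hTγ : #T ≤ γ 0 := not_lt.mp (mt mem_DofA_succ.mpr hγ)
  have hfib : ∀ a₁ ∈ s, ∃ ψ ∈ restrictSupport k {d | lexLt d γ.tail},
      ∀ b ∈ fiber A a₁, eval b ψ = eval b (monomial γ.tail 1) := fun a₁ ha₁ =>
    exists_lexLt_eqOn_of_notMem_DofA (ih _ _)
      fun hD => (mem_sdiff.mp ha₁).2 (mem_filter.mpr ⟨(mem_sdiff.mp ha₁).1, hD⟩)
  choose! ψ hψ hψeval using hfib
  set P := Lagrange.nodal T id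
  set q := Polynomial.X ^ γ 0 /ₘ P
  set r := Polynomial.X ^ γ 0 %ₘ P
  refine mem_sup_vanishingSubspace_of_eval_eq (g := Polynomial.aeval (X 0) r *
      rename Fin.succ (monomial γ.tail 1) + ∑ a₁ ∈ s,
        Polynomial.aeval (X 0) (q * P * Lagrange.basis s id a₁) * rename Fin.succ (ψ a₁))
    (Submodule.add_mem _ ?_ (Submodule.sum_mem _ fun a₁ ha₁ => ?_)) fun a ha => ?_
  · refine restrictSupport_mono _ ?_ (aeval_X_zero_mul_rename_succ_mem_restrictSupport
      ((monomial_mem_restrictSupport _).mpr (Or.inl (Set.mem_singleton γ.tail))))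
    rintro d ⟨hd0, hdt⟩
    exact lexLt_succ_iff.mpr (Or.inr ⟨congrArg (⇑) hdt,
      (lt_card_of_mem_support_modByMonic_nodal hd0).trans_le hTγ⟩)
  · refine restrictSupport_mono _ ?_ (aeval_X_zero_mul_rename_succ_mem_restrictSupport (hψ a₁ ha₁))
    exact fun d hd => lexLt_succ_iff.mpr (Or.inl hd.2)
  · have ha₀ : a 0 ∈ T ∪ s := by
      rw [union_sdiff_of_subset (filter_subset _ _)]
      exact mem_image_of_mem _ ha
    have hnodal : P.eval (a 0) *
        ∑ a₁ ∈ s, (Lagrange.basis s id a₁).eval (a 0) * eval (Fin.tail a) (ψ a₁) =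
          P.eval (a 0) * eval (Fin.tail a) (monomial γ.tail 1) :=
      eval_nodal_mul_sum_basis (Set.injOn_id _) ha₀ fun has => hψeval _ has _ (tail_mem_fiber ha)
    have hdiv : r.eval (a 0) + P.eval (a 0) * q.eval (a 0) = a 0 ^ γ 0 := by
      simpa using congrArg (Polynomial.eval (a 0))
        (Polynomial.modByMonic_add_div (Polynomial.X ^ γ 0) P)
    simp only [eval_monomial_succ, map_add, map_sum, eval_aeval_X_zero_mul_rename_succ,
      Polynomial.eval_mul, mul_assoc, ← mul_sum, hnodal]
    linear_combination (-eval (Fin.tail a) (monomial γ.tail 1)) * hdiv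

end Reduction

theorem monomial_mem_restrictSupport_DofA_sup_vanishingSubspace :
    ∀ (n : ℕ) (A : Finset (Fin n → k)) (γ : Fin n →₀ ℕ),
      monomial γ 1 ∈ restrictSupport k {d | ⇑d ∈ DofA n A ∧ lexLe d γ} ⊔ vanishingSubspace A
  | 0, A, γ => by
    rcases A.eq_empty_or_nonempty with rfl | ⟨a, ha⟩
    · exact Submodule.mem_sup_right
        (mem_vanishingSubspace.mpr fun a ha => absurd ha (notMem_empty a))
    · refine Submodule.mem_sup_left ((monomial_mem_restrictSupport _).mpr (Or.inl ⟨?_, Or.inr rfl⟩))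
      exact mem_image.mpr ⟨a, ha, Subsingleton.elim _ _⟩
  | n + 1, A, γ => by
    induction γ using (InvImage.wf (fun d : Fin (n + 1) →₀ ℕ => ⇑d) wellFounded_lexLt).induction
      with
    | _ γ ihγ =>
      by_cases hγ : ⇑γ ∈ DofA (n + 1) A
      · exact Submodule.mem_sup_left
          ((monomial_mem_restrictSupport _).mpr (Or.inl ⟨hγ, Or.inr rfl⟩))
      · exact sup_restrictSupport_lexLt_le A γ ihγ
          (monomial_mem_restrictSupport_lexLt_sup_of_notMem_DofA
            (monomial_mem_restrictSupport_DofA_sup_vanishingSubspace n) hγ)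

/-- Section 5 of the paper (the polynomials `φ_β`), for `n ≥ 2` (here `n + 2`
variables): for every `β ∈ E(D(A))` there is a polynomial `φ_β ∈ k[X₁,…,X_{n+2}]` such
that (i) its lexicographic leading term is `X^β`; (ii) every exponent `γ` of a
nonleading term satisfies either (`p̂(γ)` lies in `⋃_{a₁ ∈ p(A)} D(H(a₁))`,
`p̂(γ) < p̂(β)` lexicographically, and `γ₁ < #p(A)`) or (`p̂(γ) = p̂(β)` and
`γ₁ < β₁`); and (iii) `φ_β(a) = 0` for all `a ∈ A`.  Here `p` is the first-coordinate
projection, `p̂ = Fin.tail` forgets the first coordinate, and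
`H(a₁) = p⁻¹(a₁) ∩ A ⊆ k^{n+1}`. -/
theorem stmt_17 (n : ℕ) (A : Finset (Fin (n + 2) → k)) (β : Fin (n + 2) → ℕ)
    (hβ : inE (DofA (n + 2) A) β) :
    ∃ φ : MvPolynomial (Fin (n + 2)) k,
      (coeffv φ β = 1 ∧ ∀ γ : Fin (n + 2) → ℕ, coeffv φ γ ≠ 0 → γ ≠ β → lexLt γ β) ∧
      (∀ γ : Fin (n + 2) → ℕ, coeffv φ γ ≠ 0 → γ ≠ β →
        ((Fin.tail γ ∈ (A.image (fun a => a 0)).biUnion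
              (fun a1 => DofA (n + 1)
                ((A.filter (fun a => a 0 = a1)).image (fun a => Fin.tail a))) ∧
            lexLt (Fin.tail γ) (Fin.tail β) ∧
            γ 0 < (A.image (fun a => a 0)).card) ∨
          (Fin.tail γ = Fin.tail β ∧ γ 0 < β 0))) ∧
      (∀ a ∈ A, MvPolynomial.eval a φ = 0) := by
  obtain ⟨ψ, hψ, φ, hφ, hsum⟩ := Submodule.mem_sup.mp
    (monomial_mem_restrictSupport_DofA_sup_vanishingSubspace (n + 2) A
      (Finsupp.equivFunOnFinite.symm β))
  have hcoeff : ∀ γ, coeffv φ γ = (if γ = β then 1 else 0) - coeffv ψ γ := fun γ => by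
    simp [coeffv, eq_sub_of_add_eq' hsum, coeff_monomial, eq_comm]
  have hψD : ∀ γ, coeffv ψ γ ≠ 0 → γ ∈ DofA (n + 2) A ∧ lexLe γ β := fun γ hγ => by
    simpa using hψ (mem_support_iff.mpr hγ)
  have hlt : ∀ γ, coeffv φ γ ≠ 0 → γ ≠ β → γ ∈ DofA (n + 2) A ∧ lexLt γ β := by
    intro γ hγ hne
    rw [hcoeff, if_neg hne, zero_sub, neg_ne_zero] at hγ
    obtain ⟨hD, hle | rfl⟩ := hψD γ hγ
    exacts [⟨hD, hle⟩, absurd rfl hne]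
  refine ⟨φ, ⟨?_, fun γ hγ hne => (hlt γ hγ hne).2⟩, fun γ hγ hne =>
    tail_mem_or_of_mem_DofA_of_lexLt (hlt γ hγ hne).1 (hlt γ hγ hne).2, mem_vanishingSubspace.mp hφ⟩
  rw [hcoeff, if_pos rfl, sub_eq_self]
  by_contra h
  exact hβ.1 (hψD β h).1
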